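/- arXiv:2502.18893 — 3 statements merged into one kernel-verified Lean document; each statement's English description precedes it below -/
import Mathlib

section
/- Let L ∈ ℝ^{n×n} be symmetric positive semidefinite with kernel exactly span{1}, let ε > 0 be such that ελ < 2 for every eigenvalue λ of L, and let c ∈ ℝⁿ. If z[0] ∈ ℝⁿ satisfies 1ᵀz[0] = 1, then the iterates z[k+1] = (I − εL)·z[k] + εL·c converge, as k → ∞, to z* = c + ((1 − 1ᵀc)/n)·1, which is the unique minimizer of (1/2)‖z − c‖² subject to 1ᵀz = 1. -/
open Matrix Filter Topology

/-!
The error `z k - zstar` obeys the linear recursion `e ↦ (1 - ε L) e`, because `zstar - c` is a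
multiple of `1`, which `L` kills. In an orthonormal eigenbasis of `L` the coordinate along an
eigenvector with eigenvalue `λ` is multiplied by `1 - ε λ` at each step. For `λ > 0` the factor
has absolute value `< 1`; for `λ = 0` the eigenvector is a multiple of `1`, and the coordinate
vanishes because the initial error sums to zero. Optimality of `zstar` is Pythagoras: `zstar - c`
is a multiple of `1`, hence orthogonal to the affine constraint `∑ i, w i = 1`.
-/

theorem Module.End.pow_apply_eq_sum_of_basis {R M ι : Type*} [Semiring R] [AddCommMonoid M]
    [Module R M] [Fintype ι] {f : Module.End R M} (b : Basis ι R M) {μ : ι → R}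
    (hb : ∀ i, f (b i) = μ i • b i) (x : M) (k : ℕ) :
    (f ^ k) x = ∑ i, (b.repr x i * μ i ^ k) • b i := by
  have hpow : ∀ i, (f ^ k) (b i) = μ i ^ k • b i := fun i => by
    induction k with
    | zero => simp
    | succ k ih => rw [pow_succ', Module.End.mul_apply, ih, map_smul, hb, smul_smul, pow_succ]
  conv_lhs => rw [← b.sum_repr x]
  simp only [map_sum, map_smul, hpow, smul_smul]

theorem Module.End.tendsto_pow_apply_nhds_zero {𝕜 E ι : Type*} [NormedField 𝕜] [AddCommGroup E]
    [Module 𝕜 E] [TopologicalSpace E] [ContinuousAdd E] [ContinuousSMul 𝕜 E] [Fintype ι]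
    {f : Module.End 𝕜 E} (b : Basis ι 𝕜 E) {μ : ι → 𝕜} (hb : ∀ i, f (b i) = μ i • b i) {x : E}
    (hx : ∀ i, b.repr x i ≠ 0 → ‖μ i‖ < 1) :
    Tendsto (fun k => (f ^ k) x) atTop (𝓝 0) := by
  simp_rw [f.pow_apply_eq_sum_of_basis b hb]
  rw [← Finset.sum_const_zero (s := Finset.univ (α := ι))]
  refine tendsto_finsetSum _ fun i _ => ?_
  by_cases hi : b.repr x i = 0
  · simpa [hi] using tendsto_const_nhds
  · simpa using ((tendsto_pow_atTop_nhds_zero_of_norm_lt_one (hx i hi)).const_mul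
      (b.repr x i)).smul_const (b i)

theorem sub_eq_pow_apply_sub_of_affine_recursion {R M : Type*} [Semiring R] [AddCommGroup M]
    [Module R M] {f : Module.End R M} {d p : M} {z : ℕ → M}
    (hz : ∀ k, z (k + 1) = f (z k) + d) (hp : f p + d = p) (k : ℕ) :
    z k - p = (f ^ k) (z 0 - p) := by
  induction k with
  | zero => simp
  | succ k ih =>
    rw [pow_succ', Module.End.mul_apply, ← ih, map_sub, hz, eq_sub_of_add_eq' hp]
    abel

theorem norm_sub_lt_norm_sub_of_inner_eq_zero {F : Type*} [NormedAddCommGroup F]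
    [InnerProductSpace ℝ F] {w p c : F} (h : inner ℝ (w - p) (p - c) = 0) (hne : w ≠ p) :
    ‖p - c‖ < ‖w - c‖ := by
  have hpyth : ‖w - c‖ ^ 2 = ‖w - p‖ ^ 2 + ‖p - c‖ ^ 2 := by
    rw [← sub_add_sub_cancel w p c, norm_add_sq_real, h]
    ring
  have hwp : 0 < ‖w - p‖ := norm_pos_iff.mpr (sub_ne_zero.mpr hne)
  exact lt_of_pow_lt_pow_left₀ 2 (norm_nonneg _) (by nlinarith)

theorem EuclideanSpace.inner_eq_zero_of_const_of_sum_eq_zero {ι : Type*} [Fintype ι]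
    {v x : EuclideanSpace ℝ ι} {s : ℝ} (hv : ∀ i, v i = s) (hx : ∑ i, x i = 0) :
    inner ℝ v x = 0 := by
  simp [PiLp.inner_apply, hv, ← Finset.sum_mul, hx]

section

variable {ι : Type*} [Fintype ι] [DecidableEq ι] {L : Matrix ι ι ℝ}

theorem Matrix.IsHermitian.toEuclideanLin_one_sub_smul_eigenvectorBasis (hL : L.IsHermitian)
    (ε : ℝ) (i : ι) :
    toEuclideanLin (1 - ε • L) (hL.eigenvectorBasis i) =
      (1 - ε * hL.eigenvalues i) • hL.eigenvectorBasis i := by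
  ext j
  simp only [Matrix.toLpLin_apply, sub_mulVec, one_mulVec, smul_mulVec,
    hL.mulVec_eigenvectorBasis, WithLp.ofLp_smul, Pi.sub_apply, Pi.smul_apply, smul_eq_mul]
  ring

theorem Matrix.PosSemidef.abs_one_sub_mul_eigenvalues_lt_one (hL : L.PosSemidef)
    (hker : ∀ v, L *ᵥ v = 0 → ∃ s : ℝ, v = s • 1) {ε : ℝ} (hε : 0 < ε)
    (heig : ∀ μ : ℝ, (∃ v, v ≠ 0 ∧ L *ᵥ v = μ • v) → ε * μ < 2)
    {x : EuclideanSpace ℝ ι} (hx : ∑ i, x i = 0) {i : ι}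
    (hi : inner ℝ (hL.1.eigenvectorBasis i) x ≠ 0) :
    |1 - ε * hL.1.eigenvalues i| < 1 := by
  have hpos : 0 < hL.1.eigenvalues i := by
    refine (hL.eigenvalues_nonneg i).lt_of_ne' fun h0 => hi ?_
    obtain ⟨s, hs⟩ := hker _ (by rw [hL.1.mulVec_eigenvectorBasis, h0, zero_smul])
    exact EuclideanSpace.inner_eq_zero_of_const_of_sum_eq_zero (s := s)
      (fun j => by simpa using congrFun hs j) hx
  have hne : ⇑(hL.1.eigenvectorBasis i) ≠ 0 := fun h =>
    hL.1.eigenvectorBasis.orthonormal.ne_zero i (by ext j; exact congrFun h j)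
  have hlt := heig _ ⟨_, hne, hL.1.mulVec_eigenvectorBasis i⟩
  rw [abs_lt]
  constructor <;> nlinarith

end

/-- Let `L ∈ ℝ^{n×n}` be symmetric positive semidefinite with kernel exactly `span{1}`,
let `ε > 0` satisfy `ελ < 2` for every eigenvalue `λ` of `L`, and let `c ∈ ℝⁿ`. If
`1ᵀz[0] = 1`, then the iterates `z[k+1] = (I − εL)z[k] + εLc` converge to
`z* = c + ((1 − 1ᵀc)/n)·1`, the unique minimizer of `(1/2)‖z − c‖²` subject to `1ᵀz = 1`. -/
theorem projected_gradient_converges (n : ℕ) (L : Matrix (Fin n) (Fin n) ℝ)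
    (hL : L.PosSemidef)
    (hker : ∀ x : Fin n → ℝ, L *ᵥ x = 0 ↔ ∃ t : ℝ, x = t • (1 : Fin n → ℝ))
    (ε : ℝ) (hε : 0 < ε)
    (heig : ∀ μ : ℝ, (∃ v : Fin n → ℝ, v ≠ 0 ∧ L *ᵥ v = μ • v) → ε * μ < 2)
    (c : EuclideanSpace ℝ (Fin n)) (z : ℕ → EuclideanSpace ℝ (Fin n))
    (hz0 : (∑ i, z 0 i) = 1)
    (hiter : ∀ k i, z (k + 1) i =
      (((1 : Matrix (Fin n) (Fin n) ℝ) - ε • L) *ᵥ (fun j => z k j)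
        + ε • (L *ᵥ (fun j => c j))) i)
    (zstar : EuclideanSpace ℝ (Fin n))
    (hzstar : ∀ i, zstar i = c i + (1 - ∑ j, c j) / (n : ℝ)) :
    Tendsto z atTop (nhds zstar) ∧
    (∑ i, zstar i) = 1 ∧
    (∀ w : EuclideanSpace ℝ (Fin n), (∑ i, w i) = 1 → w ≠ zstar →
      ‖zstar - c‖ < ‖w - c‖) := by
  have hn : n ≠ 0 := by rintro rfl; simp at hz0
  have hsum : ∑ i, zstar i = 1 := by
    simp only [hzstar, Finset.sum_add_distrib, Finset.sum_const, Finset.card_univ,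
      Fintype.card_fin, nsmul_eq_mul]
    field_simp
    ring
  obtain ⟨t, ht⟩ : ∃ t, ∀ i, zstar i = c i + t := ⟨_, hzstar⟩
  have hLzstar : L *ᵥ zstar = L *ᵥ c := by
    rw [← sub_eq_zero, ← mulVec_sub, hker]
    exact ⟨t, funext fun i => by simp [ht]⟩
  refine ⟨?_, hsum, fun w hw hne => norm_sub_lt_norm_sub_of_inner_eq_zero ?_ hne⟩
  · have herr := sub_eq_pow_apply_sub_of_affine_recursion (f := toEuclideanLin (1 - ε • L))
      (p := zstar) (d := WithLp.toLp 2 (ε • (L *ᵥ c))) (fun k => by ext i; exact hiter k i)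
      (by ext i; simp [hLzstar])
    have hx : ∑ i, (z 0 - zstar) i = 0 := by simp [Finset.sum_sub_distrib, hz0, hsum]
    have hcontr : ∀ i, hL.1.eigenvectorBasis.toBasis.repr (z 0 - zstar) i ≠ 0 →
        ‖1 - ε * hL.1.eigenvalues i‖ < 1 := fun i hi => by
      rw [OrthonormalBasis.coe_toBasis_repr_apply, OrthonormalBasis.repr_apply_apply] at hi
      exact (Real.norm_eq_abs _).trans_lt <|
        hL.abs_one_sub_mul_eigenvalues_lt_one (fun v => (hker v).mp) hε heig hx hi
    have hdecay := Module.End.tendsto_pow_apply_nhds_zero (f := toEuclideanLin (1 - ε • L)) _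
      (fun i => by simpa only [OrthonormalBasis.coe_toBasis] using
        hL.1.toEuclideanLin_one_sub_smul_eigenvectorBasis ε i) hcontr
    exact tendsto_sub_nhds_zero_iff.mp <| hdecay.congr fun k => (herr k).symm
  · rw [real_inner_comm]
    exact EuclideanSpace.inner_eq_zero_of_const_of_sum_eq_zero (s := t) (by simp [ht])
      (by simp [Finset.sum_sub_distrib, hw, hsum])
end

section
/- Let R (real agents) and S (shadow agents) be finite sets with R nonempty, let the agent set be A = R ⊔ S, and let T be a finite set of tasks with a distinguished trajectory task P ∈ T and |A| = |T|. Let ε > 0, M > 2/ε, and let w : A × T → ℝ be a weight function satisfying: (i) 0 < w(r, t) ≤ 1/ε for every real agent r ∈ R and every task t ∈ T; (ii) w(s, P) = −M for every shadow agent s ∈ S; and (iii) −1/ε ≤ w(s, t) < 0 for every shadow agent s ∈ S and every task t ≠ P. Then every bijection σ : A → T that maximizes the total assignment weight Σ_{a ∈ A} w(a, σ(a)) over all bijections assigns the trajectory task P to a real agent, i.e., σ⁻¹(P) ∈ R. -/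
/-- Shadow agents never get the trajectory task. Let `R` (real agents) be nonempty, `S`
(shadow agents), agent set `A = R ⊕ S`, tasks `T` with trajectory task `P ∈ T` and
`|A| = |T|`. With `ε > 0`, `M > 2/ε`, weights satisfying `0 < w(r,t) ≤ 1/ε` for real
agents, `w(s,P) = −M`, and `−1/ε ≤ w(s,t) < 0` for shadow agents on tasks `t ≠ P`, every
weight-maximizing bijection `σ : A → T` assigns `P` to a real agent. -/
theorem shadow_agent_never_assigned_trajectory_task
    {R S T : Type} [Fintype R] [Fintype S] [Fintype T] [Nonempty R]
    (hcard : Fintype.card (R ⊕ S) = Fintype.card T)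
    (P : T) (ε M : ℝ) (hε : 0 < ε) (hM : 2 / ε < M)
    (w : (R ⊕ S) → T → ℝ)
    (hreal : ∀ (r : R) (t : T), 0 < w (Sum.inl r) t ∧ w (Sum.inl r) t ≤ 1 / ε)
    (hshadowP : ∀ s : S, w (Sum.inr s) P = -M)
    (hshadowO : ∀ (s : S) (t : T), t ≠ P →
      -(1 / ε) ≤ w (Sum.inr s) t ∧ w (Sum.inr s) t < 0)
    (σ : (R ⊕ S) ≃ T)
    (hopt : ∀ σ' : (R ⊕ S) ≃ T, ∑ a, w a (σ' a) ≤ ∑ a, w a (σ a)) :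
    ∃ r : R, σ.symm P = Sum.inl r := by
  classical
  by_contra h
  push_neg at h
  obtain ⟨s, hs⟩ : ∃ s : S, σ.symm P = Sum.inr s := by
    cases hσP : σ.symm P with
    | inl r => exact absurd hσP (h r)
    | inr s => exact ⟨s, rfl⟩
  obtain ⟨r⟩ := ‹Nonempty R›
  have hxy : (Sum.inl r : R ⊕ S) ≠ Sum.inr s := by simp
  have hσy : σ (Sum.inr s) = P := by rw [← hs]; exact σ.apply_symm_apply P
  have hσxP : σ (Sum.inl r) ≠ P := by
    intro hc
    exact hxy (σ.injective (hσy ▸ hc))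
  set σ' : (R ⊕ S) ≃ T := (Equiv.swap (Sum.inl r) (Sum.inr s)).trans σ with hσ'
  have hfx : σ' (Sum.inl r) = P := by
    simp [hσ', Equiv.swap_apply_left, hσy]
  have hfy : σ' (Sum.inr s) = σ (Sum.inl r) := by
    simp [hσ', Equiv.swap_apply_right]
  have hsum : ∑ a, (w a (σ' a) - w a (σ a)) =
      (w (Sum.inl r) (σ' (Sum.inl r)) - w (Sum.inl r) (σ (Sum.inl r))) +
      (w (Sum.inr s) (σ' (Sum.inr s)) - w (Sum.inr s) (σ (Sum.inr s))) := by
    rw [← Finset.sum_subset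
      (Finset.subset_univ ({Sum.inl r, Sum.inr s} : Finset (R ⊕ S)))]
    · rw [Finset.sum_pair hxy]
    · intro a _ ha
      simp only [Finset.mem_insert, Finset.mem_singleton] at ha
      push_neg at ha
      have : Equiv.swap (Sum.inl r) (Sum.inr s) a = a :=
        Equiv.swap_apply_of_ne_of_ne ha.1 ha.2
      simp [hσ', this]
  have hpos : 0 < ∑ a, (w a (σ' a) - w a (σ a)) := by
    rw [hsum, hfx, hfy, hσy]
    have h1 := (hreal r P).1
    have h2 := (hreal r (σ (Sum.inl r))).2
    have h3 := (hshadowO s (σ (Sum.inl r)) hσxP).1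
    have h4 := hshadowP s
    have hε2 : 2 / ε = 1 / ε + 1 / ε := by ring
    rw [h4]
    linarith
  have := hopt σ'
  rw [Finset.sum_sub_distrib] at hpos
  linarith
end

section
/- Let A be a finite set of agents and T = T₀ ⊔ T' a finite set of tasks (T₀ the original tasks, T' the secondary trajectory tasks) with |A| = |T₀| + |T'|. Let w : A × T → ℝ be a weight function, and for each injection f : T₀ → A define V(f) = Σ_{t ∈ T₀} w(f(t), t). Let g₀ > 0 be a lower bound on the positive gaps of V, i.e., for all injections f, g : T₀ → A, either V(f) = V(g) or |V(f) − V(g)| ≥ g₀. Suppose 0 ≤ w(a, t') ≤ δ for every a ∈ A and t' ∈ T', with δ·|T'| < g₀. Then for every bijection σ : A → T maximizing Σ_{a ∈ A} w(a, σ(a)), the induced injection t ↦ σ⁻¹(t) from T₀ to A maximizes V over all injections from T₀ to A. In other words, introducing the secondary trajectory tasks does not alter the optimal assignment of the original tasks. -/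
/-- Secondary trajectory tasks do not alter the optimal assignment of the original tasks.
Agents `A`, tasks `T = T₀ ⊕ T'` with `|A| = |T₀| + |T'|`; for an injection `f : T₀ → A`
let `V(f) = Σ_{t ∈ T₀} w(f t, t)`. If `g₀ > 0` lower-bounds all positive gaps of `V`, and
the secondary-task weights satisfy `0 ≤ w(a, t') ≤ δ` with `δ·|T'| < g₀`, then for every
bijection `σ : A → T` maximizing `Σ_a w(a, σ(a))`, the induced injection `t ↦ σ⁻¹(t)`
maximizes `V` over all injections from `T₀` to `A`. -/
theorem secondary_tasks_do_not_alter_assignment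
    {A T₀ T' : Type} [Fintype A] [Fintype T₀] [Fintype T']
    (hcard : Fintype.card A = Fintype.card T₀ + Fintype.card T')
    (w : A → (T₀ ⊕ T') → ℝ) (g₀ δ : ℝ) (hg₀ : 0 < g₀)
    (hgap : ∀ f g : T₀ → A, Function.Injective f → Function.Injective g →
      (∑ t, w (f t) (Sum.inl t)) = (∑ t, w (g t) (Sum.inl t)) ∨
      g₀ ≤ |(∑ t, w (f t) (Sum.inl t)) - (∑ t, w (g t) (Sum.inl t))|)
    (hδ : ∀ (a : A) (t' : T'), 0 ≤ w a (Sum.inr t') ∧ w a (Sum.inr t') ≤ δ)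
    (hsmall : δ * (Fintype.card T' : ℝ) < g₀)
    (σ : A ≃ (T₀ ⊕ T'))
    (hopt : ∀ σ' : A ≃ (T₀ ⊕ T'), ∑ a, w a (σ' a) ≤ ∑ a, w a (σ a)) :
    ∀ f : T₀ → A, Function.Injective f →
      (∑ t, w (f t) (Sum.inl t)) ≤ ∑ t, w (σ.symm (Sum.inl t)) (Sum.inl t) := by
  classical
  intro f hf
  -- split the total sum of σ
  have hsplit : ∀ τ : A ≃ (T₀ ⊕ T'),
      (∑ a, w a (τ a)) =
        (∑ t, w (τ.symm (Sum.inl t)) (Sum.inl t)) +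
        (∑ t', w (τ.symm (Sum.inr t')) (Sum.inr t')) := by
    intro τ
    have := Fintype.sum_equiv τ (fun a => w a (τ a)) (fun x => w (τ.symm x) x)
      (by intro a; simp)
    rw [this, Fintype.sum_sum_type]
  -- build an equiv extending f
  have hcardc : Fintype.card ((Set.range f)ᶜ : Set A) = Fintype.card T' := by
    rw [Fintype.card_compl_set, Set.card_range_of_injective hf]
    omega
  let e' : T' ≃ ((Set.range f)ᶜ : Set A) := (Fintype.equivOfCardEq hcardc.symm)
  let τ : (T₀ ⊕ T') ≃ A :=
    ((Equiv.ofInjective f hf).sumCongr e').trans (Equiv.Set.sumCompl (Set.range f))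
  have hτ : ∀ t : T₀, τ.symm.symm (Sum.inl t) = f t := by
    intro t; simp [τ]
  -- value comparison
  have h1 : (∑ t, w (f t) (Sum.inl t)) ≤ ∑ a, w a (τ.symm a) := by
    rw [hsplit τ.symm]
    have h0 : (0:ℝ) ≤ ∑ t', w (τ.symm.symm (Sum.inr t')) (Sum.inr t') :=
      Finset.sum_nonneg fun t' _ => (hδ _ t').1
    have he : (∑ t, w (τ.symm.symm (Sum.inl t)) (Sum.inl t)) = ∑ t, w (f t) (Sum.inl t) :=
      Finset.sum_congr rfl fun t _ => by rw [hτ t]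
    linarith
  have h2 : (∑ a, w a (σ a)) ≤
      (∑ t, w (σ.symm (Sum.inl t)) (Sum.inl t)) + δ * (Fintype.card T' : ℝ) := by
    rw [hsplit σ]
    have : (∑ t', w (σ.symm (Sum.inr t')) (Sum.inr t')) ≤ δ * (Fintype.card T' : ℝ) := by
      calc (∑ t', w (σ.symm (Sum.inr t')) (Sum.inr t'))
          ≤ ∑ _t' : T', δ := Finset.sum_le_sum fun t' _ => (hδ _ t').2
        _ = δ * (Fintype.card T' : ℝ) := by
            rw [Finset.sum_const, Finset.card_univ, nsmul_eq_mul, mul_comm]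
    linarith
  have hlt : (∑ t, w (f t) (Sum.inl t)) <
      (∑ t, w (σ.symm (Sum.inl t)) (Sum.inl t)) + g₀ := by
    have := hopt τ.symm
    linarith
  have hginj : Function.Injective (fun t => σ.symm (Sum.inl t)) :=
    fun a b h => Sum.inl_injective (σ.symm.injective h)
  rcases hgap f (fun t => σ.symm (Sum.inl t)) hf hginj with h | h
  · exact le_of_eq h
  · rcases le_or_gt (∑ t, w (f t) (Sum.inl t)) (∑ t, w (σ.symm (Sum.inl t)) (Sum.inl t)) with
      h' | h'
    · exact h'
    · exfalso
      rw [abs_of_pos (by linarith)] at h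
      linarith
end
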